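/- Every numerical semigroup S with concentration 2 satisfies Wilf's conjecture: g(S) ≤ (e(S) - 1) · n(S), where g(S) is the genus, e(S) the embedding dimension, and n(S) the number of elements of S smaller than the Frobenius number. -/

import Mathlib

open Set

/-- A numerical semigroup: contains 0, closed under addition, finite complement. -/
def IsNumSgp (S : Set ℕ) : Prop :=
  0 ∈ S ∧ (∀ a ∈ S, ∀ b ∈ S, a + b ∈ S) ∧ (Sᶜ : Set ℕ).Finite

/-- The multiplicity: least positive element. -/
noncomputable def mult (S : Set ℕ) : ℕ := sInf {n | n ∈ S ∧ n ≠ 0}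

/-- next_S(s) = min { x ∈ S | s < x }. -/
noncomputable def nextS (S : Set ℕ) (s : ℕ) : ℕ := sInf {x | x ∈ S ∧ s < x}

/-- The concentration C(S) = max { next_S(s) - s | s ∈ S \ {0} }. -/
noncomputable def conc (S : Set ℕ) : ℕ :=
  sSup {d | ∃ s ∈ S, s ≠ 0 ∧ d = nextS S s - s}

/-- The Frobenius number: largest gap. -/
noncomputable def frob (S : Set ℕ) : ℕ := sSup (Sᶜ : Set ℕ)

/-- The genus: number of gaps. -/
noncomputable def genus (S : Set ℕ) : ℕ := (Sᶜ : Set ℕ).ncard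

/-- x is a minimal generator of S. -/
def IsMinGen (S : Set ℕ) (x : ℕ) : Prop :=
  x ∈ S ∧ x ≠ 0 ∧ ¬∃ a ∈ S, ∃ b ∈ S, a ≠ 0 ∧ b ≠ 0 ∧ a + b = x

/-- The embedding dimension: number of minimal generators. -/
noncomputable def edim (S : Set ℕ) : ℕ := {x | IsMinGen S x}.ncard

/-- n(S): the number of elements of S smaller than the Frobenius number. -/
noncomputable def nS (S : Set ℕ) : ℕ := {s | s ∈ S ∧ s < frob S}.ncard

/-- The half-line Δ(m) = {0} ∪ {m, m+1, ...}. -/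
def Delta (m : ℕ) : Set ℕ := {0} ∪ {n | m ≤ n}

def IsHalfLine (S : Set ℕ) : Prop := ∃ m, S = Delta m

/-- An irreducible numerical semigroup. -/
def Irred (S : Set ℕ) : Prop :=
  ¬∃ T₁ T₂ : Set ℕ, IsNumSgp T₁ ∧ IsNumSgp T₂ ∧ S ⊂ T₁ ∧ S ⊂ T₂ ∧ S = T₁ ∩ T₂

/-!
Since the concentration is 2, every gap `x` above the multiplicity `m` is isolated: `x - 1` and
`x + 1` lie in `S`. So `x ↦ x - 1` injects the gaps of an interval `[m, b)` into its elements of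
`S`, and `S` fills at least half of every such interval. For `b = F + 1` this gives
`F + 3 ≤ 2n + m`; for `b = 2m`, whose elements of `S` are all minimal generators, it gives
`m ≤ 2e`; and when `F < 2m` the elements of `S` in `[m, 2m)` also give `n + 2m ≤ e + F + 2`.
Since `g + n = F + 1`, Wilf's inequality reads `F + 1 ≤ e n`, which follows from these bounds by
arithmetic, except for `m = 4` and for `m = 3` with `F` even, where a third minimal generator has
to be exhibited by hand.
-/

variable {S : Set ℕ}

lemma mult_le_of_mem {s : ℕ} (hs : s ∈ S) (hs0 : s ≠ 0) : mult S ≤ s :=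
  Nat.sInf_le ⟨hs, hs0⟩

lemma compl_nonempty_of_conc_eq_two (hC : conc S = 2) : (Sᶜ : Set ℕ).Nonempty := by
  rw [nonempty_iff_ne_empty, Ne, compl_empty_iff]
  rintro rfl
  have hnext : ∀ s, nextS univ s = s + 1 := fun s =>
    le_antisymm (Nat.sInf_le ⟨trivial, lt_add_one s⟩)
      (Nat.sInf_mem (s := {x | x ∈ univ ∧ s < x}) ⟨s + 1, trivial, lt_add_one s⟩).2
  have hgaps : {d | ∃ s ∈ (univ : Set ℕ), s ≠ 0 ∧ d = nextS univ s - s} = {1} := by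
    ext d
    simp only [mem_ofPred_eq, mem_singleton_iff, mem_univ, true_and, hnext]
    exact ⟨fun ⟨s, _, hd⟩ => by omega, fun hd => ⟨1, one_ne_zero, by omega⟩⟩
  rw [conc, hgaps, csSup_singleton] at hC
  omega

namespace IsNumSgp

lemma mem_of_frob_lt (hS : IsNumSgp S) {x : ℕ} (hx : frob S < x) : x ∈ S := by
  by_contra h
  exact (le_csSup hS.2.2.bddAbove h).not_gt hx

lemma frob_notMem (hS : IsNumSgp S) (hne : (Sᶜ : Set ℕ).Nonempty) : frob S ∉ S :=
  Nat.sSup_mem hne hS.2.2.bddAbove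

lemma le_frob_of_notMem (hS : IsNumSgp S) {x : ℕ} (hx : x ∉ S) : x ≤ frob S :=
  le_csSup hS.2.2.bddAbove hx

lemma mult_mem (hS : IsNumSgp S) : mult S ∈ S ∧ mult S ≠ 0 :=
  Nat.sInf_mem (s := {n | n ∈ S ∧ n ≠ 0}) ⟨frob S + 1, hS.mem_of_frob_lt (by omega), by omega⟩

lemma two_le_mult (hS : IsNumSgp S) (hne : (Sᶜ : Set ℕ).Nonempty) : 2 ≤ mult S := by
  obtain ⟨hmS, hm0⟩ := hS.mult_mem
  have hm1 : mult S ≠ 1 := by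
    intro hm
    obtain ⟨x, hx⟩ := hne
    exact hx (Nat.rec hS.1 (fun k hk => hS.2.1 k hk 1 (hm ▸ hmS)) x)
  omega

lemma nextS_spec (hS : IsNumSgp S) (s : ℕ) :
    nextS S s ∈ S ∧ s < nextS S s ∧ ∀ y ∈ S, s < y → nextS S s ≤ y :=
  have h := Nat.sInf_mem (s := {x | x ∈ S ∧ s < x})
    ⟨s + frob S + 1, hS.mem_of_frob_lt (by omega), by omega⟩
  ⟨h.1, h.2, fun _ hy hsy => Nat.sInf_le ⟨hy, hsy⟩⟩

lemma bddAbove_nextS_sub (hS : IsNumSgp S) :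
    BddAbove {d | ∃ s ∈ S, s ≠ 0 ∧ d = nextS S s - s} := by
  refine ⟨frob S + 1, ?_⟩
  rintro d ⟨s, -, -, rfl⟩
  have := (hS.nextS_spec s).2.2 (s + frob S + 1) (hS.mem_of_frob_lt (by omega)) (by omega)
  omega

lemma genus_add_nS (hS : IsNumSgp S) (hne : (Sᶜ : Set ℕ).Nonempty) :
    genus S + nS S = frob S + 1 := by
  have hF := hS.frob_notMem hne
  have hgaps : (Sᶜ : Set ℕ) = Iio (frob S + 1) \ S := by
    ext x
    simp only [mem_compl_iff, mem_sdiff, mem_Iio]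
    exact ⟨fun hx => ⟨Nat.lt_succ_of_le (hS.le_frob_of_notMem hx), hx⟩, And.right⟩
  have hsmall : {s | s ∈ S ∧ s < frob S} = Iio (frob S + 1) ∩ S := by
    ext x
    simp only [mem_ofPred_eq, mem_inter_iff, mem_Iio]
    constructor
    · rintro ⟨hx, hxF⟩; exact ⟨by omega, hx⟩
    · rintro ⟨hxF, hx⟩; exact ⟨hx, lt_of_le_of_ne (by omega) (fun h => hF (h ▸ hx))⟩
  rw [genus, nS, hgaps, hsmall, add_comm,
    ncard_inter_add_ncard_sdiff_eq_ncard _ _ (finite_Iio _), ncard_Iio_nat]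

lemma nS_eq (hS : IsNumSgp S) (hne : (Sᶜ : Set ℕ).Nonempty) :
    nS S = (Ico (mult S) (frob S) ∩ S).ncard + 1 := by
  have hF0 : 0 < frob S := Nat.pos_of_ne_zero fun h => hS.frob_notMem hne (h ▸ hS.1)
  have hsplit : {s | s ∈ S ∧ s < frob S} = insert 0 (Ico (mult S) (frob S) ∩ S) := by
    ext x
    simp only [mem_ofPred_eq, mem_insert_iff, mem_inter_iff, mem_Ico]
    constructor
    · rintro ⟨hx, hxF⟩
      by_cases hx0 : x = 0
      · exact Or.inl hx0
      · exact Or.inr ⟨⟨mult_le_of_mem hx hx0, hxF⟩, hx⟩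
    · rintro (rfl | ⟨⟨-, hxF⟩, hx⟩)
      · exact ⟨hS.1, hF0⟩
      · exact ⟨hx, hxF⟩
  have h0 : 0 ∉ Ico (mult S) (frob S) ∩ S := fun h => (hS.mult_mem).2 (Nat.le_zero.mp h.1.1)
  rw [nS, hsplit, ncard_insert_of_notMem h0 ((finite_Ico _ _).inter_of_left _)]

lemma isMinGen_of_lt_two_mul_mult (hS : IsNumSgp S) {x : ℕ} (hx : x ∈ S) (hmx : mult S ≤ x)
    (hx2m : x < 2 * mult S) : IsMinGen S x := by
  have hm0 := (hS.mult_mem).2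
  refine ⟨hx, by omega, ?_⟩
  rintro ⟨a, ha, b, hb, ha0, hb0, rfl⟩
  have := mult_le_of_mem ha ha0
  have := mult_le_of_mem hb hb0
  omega

lemma finite_setOf_isMinGen (hS : IsNumSgp S) : {x | IsMinGen S x}.Finite := by
  obtain ⟨hmS, hm0⟩ := hS.mult_mem
  refine (finite_Iio (frob S + mult S + 1)).subset fun x ⟨_, _, hdec⟩ => ?_
  by_contra hx
  simp only [mem_Iio, not_lt] at hx
  exact hdec ⟨mult S, hmS, x - mult S, hS.mem_of_frob_lt (by omega), hm0, by omega, by omega⟩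

-- The least element of `S` not divisible by `d` is a minimal generator.
lemma exists_isMinGen_not_dvd (hS : IsNumSgp S) {d : ℕ} (hd : 2 ≤ d) :
    ∃ z, IsMinGen S z ∧ ¬ d ∣ z := by
  have hne : {x | x ∈ S ∧ ¬ d ∣ x}.Nonempty := by
    by_cases h : d ∣ frob S + 1
    · refine ⟨frob S + 2, hS.mem_of_frob_lt (by omega), fun h' => ?_⟩
      have := Nat.le_of_dvd one_pos ((Nat.dvd_add_right h).mp h')
      omega
    · exact ⟨frob S + 1, hS.mem_of_frob_lt (by omega), h⟩
  obtain ⟨hzS, hzd⟩ := Nat.sInf_mem hne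
  refine ⟨_, ⟨hzS, fun h => hzd (h ▸ dvd_zero d), ?_⟩, hzd⟩
  rintro ⟨a, ha, b, hb, ha0, hb0, hab⟩
  have hmin : ∀ y ∈ S, ¬ d ∣ y → sInf {x | x ∈ S ∧ ¬ d ∣ x} ≤ y := fun y hy hyd =>
    Nat.sInf_le ⟨hy, hyd⟩
  by_cases hda : d ∣ a
  · have hdb : ¬ d ∣ b := fun hdb => hzd (hab ▸ dvd_add hda hdb)
    have := hmin b hb hdb
    omega
  · have := hmin a ha hda
    omega

lemma three_le_edim (hS : IsNumSgp S) {a b c : ℕ} (hab : a ≠ b) (hac : a ≠ c) (hbc : b ≠ c)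
    (ha : IsMinGen S a) (hb : IsMinGen S b) (hc : IsMinGen S c) : 3 ≤ edim S := by
  have hsub : {a, b, c} ⊆ {x | IsMinGen S x} := by
    rintro x (rfl | rfl | rfl) <;> assumption
  calc 3 = ({a, b, c} : Set ℕ).ncard := by
        rw [ncard_insert_of_notMem (by simp [hab, hac]), ncard_pair hbc]
    _ ≤ edim S := ncard_le_ncard hsub hS.finite_setOf_isMinGen

lemma two_le_edim (hS : IsNumSgp S) (hm : 2 ≤ mult S) : 2 ≤ edim S := by
  obtain ⟨z, hz, hzm⟩ := hS.exists_isMinGen_not_dvd hm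
  have hmgen := hS.isMinGen_of_lt_two_mul_mult (hS.mult_mem).1 le_rfl (by omega)
  have hsub : {z, mult S} ⊆ {x | IsMinGen S x} := by
    rintro x (rfl | rfl) <;> assumption
  have hzm' : z ≠ mult S := fun h => hzm (h ▸ dvd_rfl)
  calc 2 = ({z, mult S} : Set ℕ).ncard := (ncard_pair hzm').symm
    _ ≤ edim S := ncard_le_ncard hsub hS.finite_setOf_isMinGen

lemma ncard_Ico_mult_inter_le_edim (hS : IsNumSgp S) :
    (Ico (mult S) (2 * mult S) ∩ S).ncard ≤ edim S :=
  ncard_le_ncard (fun _ ⟨⟨hmx, hx2m⟩, hx⟩ => hS.isMinGen_of_lt_two_mul_mult hx hmx hx2m)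
    hS.finite_setOf_isMinGen

lemma nS_add_two_mul_mult_le (hS : IsNumSgp S) (hne : (Sᶜ : Set ℕ).Nonempty)
    (hmF : mult S ≤ frob S) (hF : frob S < 2 * mult S) :
    nS S + 2 * mult S ≤ edim S + frob S + 2 := by
  have hsub : (Ico (mult S) (frob S) ∩ S) ∪ Ico (frob S + 1) (2 * mult S) ⊆
      Ico (mult S) (2 * mult S) ∩ S := by
    rintro x (⟨⟨hmx, hxF⟩, hx⟩ | ⟨hFx, hx2m⟩)
    · exact ⟨⟨hmx, by omega⟩, hx⟩
    · exact ⟨⟨by omega, hx2m⟩, hS.mem_of_frob_lt (by omega)⟩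
  have hdisj : Disjoint (Ico (mult S) (frob S) ∩ S) (Ico (frob S + 1) (2 * mult S)) :=
    disjoint_left.mpr fun x hx hx' => by
      have := hx.1.2
      have := hx'.1
      omega
  have hcard := ncard_le_ncard hsub ((finite_Ico _ _).inter_of_left _)
  rw [ncard_union_eq hdisj ((finite_Ico _ _).inter_of_left _) (finite_Ico _ _),
    ncard_Ico_nat] at hcard
  have := hS.nS_eq hne
  have := hS.ncard_Ico_mult_inter_le_edim
  omega

lemma nextS_le_add_two (hS : IsNumSgp S) (hC : conc S = 2) {s : ℕ} (hs : s ∈ S) (hs0 : s ≠ 0) :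
    nextS S s ≤ s + 2 := by
  have : nextS S s - s ≤ conc S := le_csSup hS.bddAbove_nextS_sub ⟨s, hs, hs0, rfl⟩
  omega

lemma sub_one_mem_and_add_one_mem (hS : IsNumSgp S) (hC : conc S = 2) {x : ℕ}
    (hmx : mult S < x) (hx : x ∉ S) : x - 1 ∈ S ∧ x + 1 ∈ S := by
  obtain ⟨hmS, hm0⟩ := hS.mult_mem
  have hbdd : BddAbove {y | y ∈ S ∧ y < x} := ⟨x, fun y hy => hy.2.le⟩
  obtain ⟨hsS, hsx⟩ : sSup {y | y ∈ S ∧ y < x} ∈ {y | y ∈ S ∧ y < x} :=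
    Nat.sSup_mem ⟨mult S, hmS, hmx⟩ hbdd
  set s := sSup {y | y ∈ S ∧ y < x}
  -- `s` and its successor in `S` are at distance at most 2 and straddle the gap `x`.
  have hms : mult S ≤ s := le_csSup hbdd ⟨hmS, hmx⟩
  obtain ⟨hnS, hsn, -⟩ := hS.nextS_spec s
  have hxn : x < nextS S s := by
    by_contra! hnx
    have hne : nextS S s ≠ x := fun h => hx (h ▸ hnS)
    have : nextS S s ≤ s := le_csSup hbdd ⟨hnS, by omega⟩
    omega
  have := hS.nextS_le_add_two hC hsS (by omega)
  have h1 : x - 1 = s := by omega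
  have h2 : x + 1 = nextS S s := by omega
  exact ⟨h1 ▸ hsS, h2 ▸ hnS⟩

lemma add_one_lt_mult_of_notMem (hS : IsNumSgp S) (hC : conc S = 2) {x : ℕ} (hx : x ∉ S)
    (hx1 : x + 1 ∉ S) : x + 1 < mult S := by
  by_contra! h
  have hne : x + 1 ≠ mult S := fun h' => hx1 (h' ▸ (hS.mult_mem).1)
  exact hx (hS.sub_one_mem_and_add_one_mem hC (by omega) hx1).1

lemma mult_lt_frob (hS : IsNumSgp S) (hC : conc S = 2) : mult S < frob S := by
  obtain ⟨hmS, hm0⟩ := hS.mult_mem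
  have h : conc S ∈ {d | ∃ s ∈ S, s ≠ 0 ∧ d = nextS S s - s} :=
    Nat.sSup_mem ⟨_, mult S, hmS, hm0, rfl⟩ hS.bddAbove_nextS_sub
  rw [hC] at h
  obtain ⟨s, hs, hs0, hd⟩ := h
  obtain ⟨-, hsn, hnmin⟩ := hS.nextS_spec s
  have hgap : s + 1 ∉ S := fun h => by
    have := hnmin _ h (lt_add_one s)
    omega
  have := hS.le_frob_of_notMem hgap
  have := mult_le_of_mem hs hs0
  omega

lemma frob_lt_add_mult (hS : IsNumSgp S) (hC : conc S = 2) {a : ℕ} (ha : a ∈ S)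
    (ha1 : a + 1 ∈ S) : frob S < a + mult S := by
  have hF := hS.frob_notMem (compl_nonempty_of_conc_eq_two hC)
  have hm0 := (hS.mult_mem).2
  by_contra! h
  have h1 : frob S - a - 1 ∉ S := fun h' => hF <| by
    simpa [show frob S - a - 1 + (a + 1) = frob S by omega] using hS.2.1 _ h' _ ha1
  have h2 : frob S - a - 1 + 1 ∉ S := fun h' => hF <| by
    simpa [show frob S - a - 1 + 1 + a = frob S by omega] using hS.2.1 _ h' _ ha
  have := hS.add_one_lt_mult_of_notMem hC h1 h2
  omega

lemma sub_mult_le_two_mul_ncard (hS : IsNumSgp S) (hC : conc S = 2) (b : ℕ) :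
    b - mult S ≤ 2 * (Ico (mult S) b ∩ S).ncard := by
  obtain ⟨hmS, hm0⟩ := hS.mult_mem
  have hgaps : (Ico (mult S) b \ S).ncard ≤ (Ico (mult S) b ∩ S).ncard := by
    refine ncard_le_ncard_of_injOn (· - 1) (fun x ⟨⟨hmx, hxb⟩, hx⟩ => ?_) (fun x hx y hy hxy => ?_)
      ((finite_Ico _ _).inter_of_left _)
    · have hmx' : mult S < x := lt_of_le_of_ne hmx fun h => hx (h ▸ hmS)
      exact ⟨⟨by omega, by omega⟩, (hS.sub_one_mem_and_add_one_mem hC hmx' hx).1⟩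
    · have := hx.1.1
      have := hy.1.1
      simp only at hxy
      omega
  have := ncard_inter_add_ncard_sdiff_eq_ncard (Ico (mult S) b) S (finite_Ico _ _)
  rw [ncard_Ico_nat] at this
  omega

lemma frob_add_three_le (hS : IsNumSgp S) (hC : conc S = 2) :
    frob S + 3 ≤ 2 * nS S + mult S := by
  have hne := compl_nonempty_of_conc_eq_two hC
  have hF := hS.frob_notMem hne
  have hIco : Ico (mult S) (frob S + 1) ∩ S = Ico (mult S) (frob S) ∩ S := by
    ext x
    simp only [mem_inter_iff, mem_Ico]
    exact ⟨fun ⟨⟨hmx, hxF⟩, hx⟩ => ⟨⟨hmx, lt_of_le_of_ne (by omega) fun h => hF (h ▸ hx)⟩, hx⟩,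
      fun ⟨⟨hmx, hxF⟩, hx⟩ => ⟨⟨hmx, by omega⟩, hx⟩⟩
  have := hS.sub_mult_le_two_mul_ncard hC (frob S + 1)
  rw [hIco] at this
  have := hS.nS_eq hne
  have := hS.mult_lt_frob hC
  omega

lemma mult_le_two_mul_edim (hS : IsNumSgp S) (hC : conc S = 2) : mult S ≤ 2 * edim S := by
  have := hS.sub_mult_le_two_mul_ncard hC (2 * mult S)
  have := hS.ncard_Ico_mult_inter_le_edim
  omega

lemma three_le_edim_of_mult_eq_four (hS : IsNumSgp S) (hC : conc S = 2) (hm : mult S = 4) :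
    3 ≤ edim S := by
  have h4 : 4 ∈ S := hm ▸ (hS.mult_mem).1
  have hgen : ∀ x ∈ S, 4 ≤ x ∧ x < 8 → IsMinGen S x := fun x hx hbounds =>
    hS.isMinGen_of_lt_two_mul_mult hx (by omega) (by omega)
  by_cases h5 : 5 ∈ S
  · by_cases h6 : 6 ∈ S
    · exact hS.three_le_edim (by omega) (by omega) (by omega)
        (hgen 4 h4 (by omega)) (hgen 5 h5 (by omega)) (hgen 6 h6 (by omega))
    · have h7 : 7 ∈ S := (hS.sub_one_mem_and_add_one_mem hC (by omega) h6).2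
      exact hS.three_le_edim (by omega) (by omega) (by omega)
        (hgen 4 h4 (by omega)) (hgen 5 h5 (by omega)) (hgen 7 h7 (by omega))
  · have h6 : 6 ∈ S := (hS.sub_one_mem_and_add_one_mem hC (by omega) h5).2
    obtain ⟨z, hz, hz2⟩ := hS.exists_isMinGen_not_dvd le_rfl
    have hz4 : z ≠ 4 := by rintro rfl; exact hz2 (by norm_num)
    have hz6 : z ≠ 6 := by rintro rfl; exact hz2 (by norm_num)
    exact hS.three_le_edim hz4 hz6 (by omega) hz (hgen 4 h4 (by omega)) (hgen 6 h6 (by omega))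

lemma three_le_edim_of_mult_eq_three (hS : IsNumSgp S) (hC : conc S = 2) (hm : mult S = 3)
    (hFe : Even (frob S)) : 3 ≤ edim S := by
  have h3 : 3 ∈ S := hm ▸ (hS.mult_mem).1
  have h6 : 6 ∈ S := hS.2.1 3 h3 3 h3
  have hF := hS.frob_notMem (compl_nonempty_of_conc_eq_two hC)
  have hmF := hS.mult_lt_frob hC
  have hgen : ∀ x ∈ S, 3 ≤ x ∧ x < 6 → IsMinGen S x := fun x hx hbounds =>
    hS.isMinGen_of_lt_two_mul_mult hx (by omega) (by omega)
  obtain ⟨k, hk⟩ := hFe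
  by_cases h4 : 4 ∈ S
  · by_cases h5 : 5 ∈ S
    · exact hS.three_le_edim (by omega) (by omega) (by omega)
        (hgen 3 h3 (by omega)) (hgen 4 h4 (by omega)) (hgen 5 h5 (by omega))
    · have := hS.frob_lt_add_mult hC h3 h4
      have hF4 : frob S = 4 := by omega
      exact absurd (hF4 ▸ h4) hF
  · have h5 : 5 ∈ S := (hS.sub_one_mem_and_add_one_mem hC (by omega) h4).2
    have := hS.frob_lt_add_mult hC h5 h6
    have hF6 : frob S ≠ 6 := fun h => hF (h ▸ h6)
    have h7 : 7 ∈ S := hS.mem_of_frob_lt (by omega)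
    have g7 : IsMinGen S 7 := by
      refine ⟨h7, by omega, fun ⟨a, ha, b, hb, ha0, hb0, hab⟩ => ?_⟩
      have := mult_le_of_mem ha ha0
      have := mult_le_of_mem hb hb0
      rcases (show a = 4 ∨ b = 4 by omega) with rfl | rfl
      exacts [h4 ha, h4 hb]
    exact hS.three_le_edim (by omega) (by omega) (by omega)
      (hgen 3 h3 (by omega)) (hgen 5 h5 (by omega)) g7

end IsNumSgp

lemma add_one_le_mul_of_bounds {m F n e : ℕ} (hm : 2 ≤ m) (hmF : m < F) (hF2m : F ≠ 2 * m)
    (hFn : F + 3 ≤ 2 * n + m) (hme : m ≤ 2 * e) (he : 2 ≤ e)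
    (helem : F < 2 * m → n + 2 * m ≤ e + F + 2) (he3 : m = 3 ∧ Even F ∨ m = 4 → 3 ≤ e) :
    F + 1 ≤ e * n := by
  have h2n : 2 * n ≤ e * n := Nat.mul_le_mul_right n he
  rcases (show m = 2 ∨ m = 3 ∨ m = 4 ∨ 5 ≤ m by omega) with rfl | rfl | rfl | hm5
  · omega
  · rcases Nat.even_or_odd F with hFe | ⟨k, hk⟩
    · have := Nat.mul_le_mul_right n (he3 (Or.inl ⟨rfl, hFe⟩))
      omega
    · omega
  · have := Nat.mul_le_mul_right n (he3 (Or.inr rfl))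
    omega
  · have h3n : 3 * n ≤ e * n := Nat.mul_le_mul_right n (by omega)
    rcases lt_or_gt_of_ne hF2m with hF | hF
    · have := helem hF
      have : 2 * e + 3 * n ≤ e * n + 6 := by nlinarith -- (e - 3) (n - 2) ≥ 0
      omega
    · rcases le_or_gt m 8 with hm8 | hm8
      · omega
      · have := Nat.mul_le_mul_right n (show 5 ≤ e by omega)
        omega

theorem stmt14 (S : Set ℕ) (hS : IsNumSgp S) (hC : conc S = 2) :
    genus S ≤ (edim S - 1) * nS S := by
  have hne := compl_nonempty_of_conc_eq_two hC
  have hm := hS.two_le_mult hne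
  have hmF := hS.mult_lt_frob hC
  have hmS := (hS.mult_mem).1
  have hF2m : frob S ≠ 2 * mult S := fun h =>
    hS.frob_notMem hne (h ▸ two_mul (mult S) ▸ hS.2.1 _ hmS _ hmS)
  have hwilf : frob S + 1 ≤ edim S * nS S :=
    add_one_le_mul_of_bounds hm hmF hF2m (hS.frob_add_three_le hC) (hS.mult_le_two_mul_edim hC)
      (hS.two_le_edim hm) (hS.nS_add_two_mul_mult_le hne hmF.le)
      (by rintro (⟨hm3, hFe⟩ | hm4)
          exacts [hS.three_le_edim_of_mult_eq_three hC hm3 hFe,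
            hS.three_le_edim_of_mult_eq_four hC hm4])
  have := hS.genus_add_nS hne
  rw [Nat.sub_one_mul]
  omega
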